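/- arXiv:1902.06330 — 6 statements merged into one kernel-verified Lean document; each statement's English description precedes it below -/
import Mathlib

section
/- Let f : (0,∞) → ℝ be a function satisfying f(1/x) = x^α · f(x) for all x > 0, where 0 < α < 2 (a reciprocally balanced function of weight α). Define g(x) = ∫_0^∞ f(u)/(u+x)^(2-α) du, assuming the integral converges absolutely for all x > 0. Then g satisfies g(1/x) = x^(2-α) · g(x) for all x > 0, i.e., g is reciprocally balanced of weight 2-α. -/
open MeasureTheory

/-- If `f` is reciprocally balanced of weight `α` (with `0 < α < 2`), then its
generalized Stieltjes transform `g` is reciprocally balanced of weight `2 - α`. -/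
theorem stmt0 (α : ℝ) (hα : 0 < α) (hα2 : α < 2) (f : ℝ → ℝ)
    (hf : ∀ x > (0:ℝ), f (1/x) = x ^ α * f x)
    (hint : ∀ x > (0:ℝ),
      IntegrableOn (fun u => f u / (u + x) ^ (2 - α)) (Set.Ioi 0))
    (g : ℝ → ℝ)
    (hg : ∀ x > (0:ℝ), g x = ∫ u in Set.Ioi (0:ℝ), f u / (u + x) ^ (2 - α)) :
    ∀ x > (0:ℝ), g (1/x) = x ^ (2 - α) * g x := by
  intro x hx
  rw [hg (1/x) (by positivity), hg x hx]
  have key := MeasureTheory.integral_comp_rpow_Ioi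
    (fun u => f u / (u + 1/x) ^ (2 - α)) (p := (-1:ℝ)) (by norm_num)
  rw [← key, ← integral_const_mul]
  apply setIntegral_congr_fun measurableSet_Ioi
  intro u hu
  have hu' : (0:ℝ) < u := hu
  have hux : (0:ℝ) < u + x := by positivity
  simp only [smul_eq_mul]
  have h1 : u ^ ((-1:ℝ)) = 1/u := by
    rw [Real.rpow_neg_one]; exact (one_div u).symm
  rw [h1, hf u hu']
  have h2 : (1:ℝ)/u + 1/x = (u + x) / (u * x) := by
    field_simp; ring
  rw [h2, Real.div_rpow hux.le (by positivity), Real.mul_rpow hu'.le hx.le]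
  have hup : (0:ℝ) < u ^ (2 - α) := Real.rpow_pos_of_pos hu' _
  have hxp : (0:ℝ) < x ^ (2 - α) := Real.rpow_pos_of_pos hx _
  have huα : (0:ℝ) < u ^ α := Real.rpow_pos_of_pos hu' _
  have huxp : (0:ℝ) < (u + x) ^ (2 - α) := Real.rpow_pos_of_pos hux _
  have hcomb : |(-1:ℝ)| * u ^ ((-1:ℝ) - 1) * u ^ α * u ^ (2 - α) = 1 := by
    rw [abs_neg, abs_one, one_mul, ← Real.rpow_add hu', ← Real.rpow_add hu']
    norm_num
  have hcomb' : u ^ ((-1:ℝ) - 1) * u ^ α * u ^ (2 - α) = 1 := by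
    simpa using hcomb
  field_simp
  linear_combination (f u) * hcomb'
end

section
/- Define ω(x) = ∑_{n=1}^∞ (2π²n⁴x² − 3πn²x) e^(−πn²x) for x > 0. Then for every integer n ≥ 0, ∫_0^∞ ω(x) x^n dx = (−1)^n (4π)^(n+1) n! / (4·(2n)!) · B_{2n+2}, where B_k denotes the k-th Bernoulli number. -/
open Real MeasureTheory

open Set

lemma intOn_pow_exp {a : ℝ} (ha : 0 < a) (k : ℕ) :
    IntegrableOn (fun x : ℝ => x ^ k * Real.exp (-(a * x))) (Ioi 0) := by
  have h := integrableOn_rpow_mul_exp_neg_mul_rpow (s := (k : ℝ)) (p := 1) (b := a)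
    (lt_of_lt_of_le neg_one_lt_zero (Nat.cast_nonneg k)) one_pos ha
  refine h.congr_fun (fun x hx => ?_) measurableSet_Ioi
  beta_reduce
  rw [Real.rpow_one, Real.rpow_natCast, neg_mul]

lemma int_pow_exp {a : ℝ} (ha : 0 < a) (k : ℕ) :
    ∫ x in Ioi (0:ℝ), x ^ k * Real.exp (-(a * x)) = (Nat.factorial k : ℝ) / a ^ (k + 1) := by
  have h := Real.integral_rpow_mul_exp_neg_mul_Ioi (a := (k : ℝ) + 1) (r := a)
    (by positivity) ha
  simp only [add_sub_cancel_right, Real.rpow_natCast] at h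
  rw [h, show ((k : ℝ) + 1) = ((k + 1 : ℕ) : ℝ) by push_cast; ring, Real.rpow_natCast]
  push_cast
  rw [Real.Gamma_nat_eq_factorial]
  rw [one_div, inv_pow]
  field_simp


/-- The function `ω(x) = ∑_{n≥1} (2π²n⁴x² − 3πn²x) e^(−πn²x)`. -/
noncomputable def omegaFn (x : ℝ) : ℝ :=
  ∑' n : ℕ, (2 * π ^ 2 * (n + 1 : ℝ) ^ 4 * x ^ 2 - 3 * π * (n + 1 : ℝ) ^ 2 * x) *
      Real.exp (-π * (n + 1 : ℝ) ^ 2 * x)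

/-- Moments of `ω`: `∫_0^∞ ω(x) xⁿ dx = (−1)ⁿ (4π)^(n+1) n! / (4·(2n)!) · B_{2n+2}`. -/
theorem stmt4 (n : ℕ) :
    ∫ x in Set.Ioi (0:ℝ), omegaFn x * x ^ n
    = (-1) ^ n * (4 * π) ^ (n + 1) * (Nat.factorial n) /
        (4 * (Nat.factorial (2 * n))) * ((bernoulli (2 * n + 2) : ℚ) : ℝ) := by
  set F : ℕ → ℝ → ℝ := fun m x =>
    ((2 * π ^ 2 * ((m : ℝ) + 1) ^ 4 * x ^ 2 - 3 * π * ((m : ℝ) + 1) ^ 2 * x) *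
      Real.exp (-π * ((m : ℝ) + 1) ^ 2 * x)) * x ^ n with hF
  have hπ : (0:ℝ) < π := Real.pi_pos
  have ha : ∀ m : ℕ, (0:ℝ) < π * ((m : ℝ) + 1) ^ 2 := fun m => by positivity
  -- pointwise decomposition
  have hdec : ∀ m : ℕ, ∀ x : ℝ,
      F m x = 2 * (π * ((m : ℝ) + 1) ^ 2) ^ 2 *
          (x ^ (n + 2) * Real.exp (-(π * ((m : ℝ) + 1) ^ 2 * x)))
        - 3 * (π * ((m : ℝ) + 1) ^ 2) *
          (x ^ (n + 1) * Real.exp (-(π * ((m : ℝ) + 1) ^ 2 * x))) := by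
    intro m x
    have he : -π * ((m : ℝ) + 1) ^ 2 * x = -(π * ((m : ℝ) + 1) ^ 2 * x) := by ring
    rw [hF]; simp only [he]; ring
  -- integrability
  have hInt : ∀ m : ℕ, IntegrableOn (F m) (Ioi 0) := by
    intro m
    have h1 := (intOn_pow_exp (ha m) (n + 2)).const_mul (2 * (π * ((m : ℝ) + 1) ^ 2) ^ 2)
    have h2 := (intOn_pow_exp (ha m) (n + 1)).const_mul (3 * (π * ((m : ℝ) + 1) ^ 2))
    have h12 : IntegrableOn (fun x : ℝ =>
        2 * (π * ((m : ℝ) + 1) ^ 2) ^ 2 * (x ^ (n+2) * Real.exp (-(π * ((m : ℝ) + 1) ^ 2 * x)))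
        - 3 * (π * ((m : ℝ) + 1) ^ 2) * (x ^ (n+1) * Real.exp (-(π * ((m : ℝ) + 1) ^ 2 * x))))
        (Ioi 0) := h1.sub h2
    exact h12.congr_fun (fun x _ => (hdec m x).symm) measurableSet_Ioi
  -- value of each integral
  have hval : ∀ m : ℕ, ∫ x in Ioi (0:ℝ), F m x
      = ((2 * n + 1 : ℕ) : ℝ) * (Nat.factorial (n + 1)) *
        (1 / (π * ((m : ℝ) + 1) ^ 2) ^ (n + 1)) := by
    intro m
    set a : ℝ := π * ((m : ℝ) + 1) ^ 2 with ha'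
    have ha0 : 0 < a := ha m
    rw [setIntegral_congr_fun measurableSet_Ioi (fun x _ => hdec m x)]
    rw [integral_sub (((intOn_pow_exp ha0 (n+2)).const_mul _))
      (((intOn_pow_exp ha0 (n+1)).const_mul _)), integral_const_mul, integral_const_mul,
      int_pow_exp ha0, int_pow_exp ha0]
    have hane : a ≠ 0 := ne_of_gt ha0
    have h1 : (Nat.factorial (n+2) : ℝ) = ((n:ℝ)+2) * (Nat.factorial (n+1)) := by
      rw [Nat.factorial_succ]; push_cast; ring
    rw [h1]
    field_simp
    rw [ha']; push_cast; ring
  -- summability of norms of integrals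
  have hbnd : ∀ m : ℕ, (∫ x in Ioi (0:ℝ), ‖F m x‖)
      ≤ (2 * (Nat.factorial (n + 2)) + 3 * (Nat.factorial (n + 1)) : ℝ) *
        (1 / (π ^ (n+1) * ((m : ℝ) + 1) ^ (2 * (n + 1)))) := by
    intro m
    set a : ℝ := π * ((m : ℝ) + 1) ^ 2 with ha'
    have ha0 : 0 < a := ha m
    have hG : IntegrableOn (fun x : ℝ =>
        2 * a ^ 2 * (x ^ (n+2) * Real.exp (-(a * x)))
        + 3 * a * (x ^ (n+1) * Real.exp (-(a * x)))) (Ioi 0) :=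
      ((intOn_pow_exp ha0 (n+2)).const_mul _).add ((intOn_pow_exp ha0 (n+1)).const_mul _)
    have hle : ∀ x ∈ Ioi (0:ℝ), ‖F m x‖
        ≤ 2 * a ^ 2 * (x ^ (n+2) * Real.exp (-(a * x)))
          + 3 * a * (x ^ (n+1) * Real.exp (-(a * x))) := by
      intro x hx
      have hx0 : 0 < x := hx
      rw [hdec m x, Real.norm_eq_abs]
      refine (abs_sub _ _).trans ?_
      have e1 : |2 * a ^ 2 * (x ^ (n+2) * Real.exp (-(a * x)))|
          = 2 * a ^ 2 * (x ^ (n+2) * Real.exp (-(a * x))) := abs_of_nonneg (by positivity)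
      have e2 : |3 * a * (x ^ (n+1) * Real.exp (-(a * x)))|
          = 3 * a * (x ^ (n+1) * Real.exp (-(a * x))) := abs_of_nonneg (by positivity)
      rw [e1, e2]
    have := setIntegral_mono_on ((hInt m).norm) hG measurableSet_Ioi hle
    refine this.trans ?_
    rw [integral_add (((intOn_pow_exp ha0 (n+2)).const_mul _))
      (((intOn_pow_exp ha0 (n+1)).const_mul _)), integral_const_mul, integral_const_mul,
      int_pow_exp ha0, int_pow_exp ha0]
    have hane : a ≠ 0 := ne_of_gt ha0
    have key : a ^ (n + 1) = π ^ (n+1) * ((m : ℝ) + 1) ^ (2 * (n + 1)) := by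
      rw [ha', mul_pow, ← pow_mul, mul_comm 2 (n+1)]
    rw [← key]
    refine le_of_eq ?_
    have h2 : a ^ (n + 2 + 1) = a ^ (n+1) * a ^ 2 := by ring
    have h3 : a ^ (n + 1 + 1) = a ^ (n+1) * a := by ring
    rw [h2, h3]
    field_simp
  -- summability of 1/(m+1)^(2(n+1))
  have hsum1 : Summable (fun m : ℕ => 1 / ((m:ℝ) + 1) ^ (2 * (n + 1))) := by
    have h1 : Summable (fun j : ℕ => 1 / (j:ℝ) ^ (2 * (n + 1))) :=
      Real.summable_one_div_nat_pow.mpr (by omega)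
    have h2 := (summable_nat_add_iff (f := fun j : ℕ => 1 / (j:ℝ) ^ (2 * (n + 1))) 1).mpr h1
    push_cast at h2
    exact h2
  -- summability of integrals of norms
  have hSumm : Summable (fun m : ℕ => ∫ x in Ioi (0:ℝ), ‖F m x‖) := by
    refine Summable.of_nonneg_of_le (fun m => integral_nonneg (fun x => norm_nonneg _)) hbnd ?_
    have := hsum1.mul_left
      ((2 * (Nat.factorial (n + 2)) + 3 * (Nat.factorial (n + 1)) : ℝ) / π ^ (n+1))
    refine this.congr (fun m => ?_)
    rw [mul_one_div, mul_one_div, div_div]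
  -- swap sum and integral
  have hswap := MeasureTheory.integral_tsum_of_summable_integral_norm
    (μ := volume.restrict (Ioi (0:ℝ))) hInt hSumm
  have hω : ∀ x : ℝ, omegaFn x * x ^ n = ∑' m : ℕ, F m x := by
    intro x
    rw [omegaFn, ← tsum_mul_right]
  simp only [hω]
  rw [← hswap]
  simp only [hval]
  -- rewrite each term
  have hterm : ∀ m : ℕ, ((2 * n + 1 : ℕ) : ℝ) * (Nat.factorial (n + 1)) *
      (1 / (π * ((m : ℝ) + 1) ^ 2) ^ (n + 1))
      = (((2 * n + 1 : ℕ) : ℝ) * (Nat.factorial (n + 1)) / π ^ (n+1)) *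
        (1 / ((m:ℝ) + 1) ^ (2 * (n + 1))) := by
    intro m
    rw [mul_pow, ← pow_mul, mul_comm 2 (n+1)]
    rw [mul_one_div, mul_one_div, div_div]
  simp only [hterm]
  rw [tsum_mul_left]
  -- evaluate the zeta sum
  have hZ : HasSum (fun m : ℕ => 1 / ((m:ℝ) + 1) ^ (2 * (n + 1)))
      ((-1 : ℝ) ^ (n + 1 + 1) * (2 : ℝ) ^ (2 * (n + 1) - 1) * π ^ (2 * (n + 1)) *
        (bernoulli (2 * (n + 1)) : ℚ) / (Nat.factorial (2 * (n + 1)))) := by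
    have h0 := hasSum_zeta_nat (k := n + 1) (Nat.succ_ne_zero n)
    have h1 : HasSum (fun m : ℕ => 1 / (((m + 1 : ℕ)):ℝ) ^ (2 * (n + 1)))
        ((-1 : ℝ) ^ (n + 1 + 1) * (2 : ℝ) ^ (2 * (n + 1) - 1) * π ^ (2 * (n + 1)) *
          (bernoulli (2 * (n + 1)) : ℚ) / (Nat.factorial (2 * (n + 1)))) :=
      (hasSum_nat_add_iff (f := fun j : ℕ => 1 / (j:ℝ) ^ (2 * (n + 1))) 1).mpr
        (by simpa [Finset.range_one, zero_pow (by omega : 2 * (n + 1) ≠ 0)] using h0)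
    have heq : ∀ m : ℕ, 1 / ((m + 1 : ℕ) : ℝ) ^ (2 * (n + 1)) = 1 / ((m:ℝ) + 1) ^ (2 * (n + 1)) := by
      intro m; push_cast; ring
    simpa [heq] using h1
  rw [hZ.tsum_eq]
  -- final arithmetic
  have e1 : 2 * (n + 1) - 1 = 2 * n + 1 := by omega
  have e2 : 2 * (n + 1) = 2 * n + 2 := by omega
  rw [e1, e2]
  have e3 : ((-1:ℝ)) ^ (n + 1 + 1) = (-1:ℝ) ^ n := by
    rw [show n + 1 + 1 = n + 2 by ring, pow_add]; norm_num
  have e4 : ((Nat.factorial (2*n+2)) : ℝ) = ((2:ℝ)*n+2) * (2*n+1) * (Nat.factorial (2*n)) := by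
    rw [show 2*n+2 = (2*n+1)+1 by ring, Nat.factorial_succ, Nat.factorial_succ]; push_cast; ring
  have e5 : ((Nat.factorial (n+1)) : ℝ) = ((n:ℝ)+1) * (Nat.factorial n) := by
    rw [Nat.factorial_succ]; push_cast; ring
  have e6 : ((4*π:ℝ)) ^ (n+1) = 2 * (2:ℝ)^(2*n+1) * π^(n+1) := by
    rw [show (4*π:ℝ) = 2^2*π by norm_num, mul_pow, ← pow_mul]
    rw [show 2*(n+1) = (2*n+1)+1 by ring, pow_succ]
    ring
  have e7 : (π:ℝ) ^ (2*n+2) = π^(n+1) * π^(n+1) := by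
    rw [← pow_add]; ring_nf
  rw [e3, e4, e5, e6, e7]
  have hπp : (0:ℝ) < π ^ (n+1) := by positivity
  have hfac : ((Nat.factorial (2*n)) : ℝ) ≠ 0 := by
    exact_mod_cast Nat.factorial_ne_zero (2*n)
  have h2n1 : ((2*n+1:ℕ):ℝ) = 2*(n:ℝ)+1 := by push_cast; ring
  rw [h2n1]
  field_simp
  ring
end

section
/- Define ω(x) = ∑_{n=1}^∞ (2π²n⁴x² − 3πn²x) e^(−πn²x). The function ω satisfies the functional equation ω(1/x) = √x · ω(x) for all x > 0. -/
open Real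

namespace OmegaAux

lemma summable_nat (m : ℕ) {x : ℝ} (hx : 0 < x) :
    Summable (fun n : ℕ => (n : ℝ) ^ m * Real.exp (-π * (n : ℝ) ^ 2 * x)) := by
  have hr : ‖Real.exp (-π * x)‖ < 1 := by
    rw [Real.norm_eq_abs, abs_of_pos (Real.exp_pos _), Real.exp_lt_one_iff]
    nlinarith [pi_pos]
  refine Summable.of_nonneg_of_le (fun n => ?_) (fun n => ?_)
    (summable_pow_mul_geometric_of_norm_lt_one m hr)
  · positivity
  · have h1 : Real.exp (-π * (n : ℝ) ^ 2 * x) ≤ Real.exp (-π * x) ^ n := by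
      rw [← Real.exp_nat_mul, Real.exp_le_exp]
      have : (n : ℝ) ≤ (n : ℝ) ^ 2 := by
        exact_mod_cast Nat.cast_le.mpr (Nat.le_self_pow two_ne_zero n)
      nlinarith [mul_nonneg (mul_pos pi_pos hx).le (sub_nonneg.mpr this)]
    have h2 : (0 : ℝ) ≤ (n : ℝ) ^ m := by positivity
    calc (n : ℝ) ^ m * Real.exp (-π * (n : ℝ) ^ 2 * x)
        ≤ (n : ℝ) ^ m * Real.exp (-π * x) ^ n := by exact mul_le_mul_of_nonneg_left h1 h2
      _ = (n : ℝ) ^ m * Real.exp (-π * x) ^ n := rfl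

lemma summable_int (m : ℕ) {x : ℝ} (hx : 0 < x) :
    Summable (fun n : ℤ => (n : ℝ) ^ (2 * m) * Real.exp (-π * (n : ℝ) ^ 2 * x)) := by
  apply Summable.of_nat_of_neg
  · exact summable_nat (2 * m) hx
  · refine (summable_nat (2 * m) hx).congr fun n => ?_
    push_cast
    rw [Even.neg_pow (even_two_mul m), neg_sq]

noncomputable def G (x : ℝ) : ℝ := ∑' n : ℤ, Real.exp (-π * (n : ℝ) ^ 2 * x)

noncomputable def G1 (x : ℝ) : ℝ :=
  ∑' n : ℤ, -π * (n : ℝ) ^ 2 * Real.exp (-π * (n : ℝ) ^ 2 * x)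

noncomputable def G2 (x : ℝ) : ℝ :=
  ∑' n : ℤ, π ^ 2 * (n : ℝ) ^ 4 * Real.exp (-π * (n : ℝ) ^ 2 * x)

lemma term_hasDerivAt (c : ℝ) (n : ℤ) (y : ℝ) :
    HasDerivAt (fun t => c * Real.exp (-π * (n : ℝ) ^ 2 * t))
      (c * (-π * (n : ℝ) ^ 2) * Real.exp (-π * (n : ℝ) ^ 2 * y)) y := by
  have h := (((hasDerivAt_id y).const_mul (-π * (n : ℝ) ^ 2)).exp).const_mul c
  refine h.congr_deriv ?_
  simp only [id_eq]
  ring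

lemma exp_term_mono (n : ℤ) {a b : ℝ} (hab : a ≤ b) :
    Real.exp (-π * (n : ℝ) ^ 2 * b) ≤ Real.exp (-π * (n : ℝ) ^ 2 * a) := by
  rw [Real.exp_le_exp]
  nlinarith [mul_nonneg (mul_nonneg pi_pos.le (sq_nonneg ((n : ℝ)))) (sub_nonneg.mpr hab)]

lemma hasDerivAt_G {x : ℝ} (hx : 0 < x) : HasDerivAt G (G1 x) x := by
  have h2 : (0 : ℝ) < x / 2 := by linarith
  have hmem : x ∈ Set.Ioi (x / 2) := by simp [Set.mem_Ioi]; linarith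
  have hu : Summable (fun n : ℤ => π * (n : ℝ) ^ 2 * Real.exp (-π * (n : ℝ) ^ 2 * (x / 2))) := by
    refine ((summable_int 1 h2).mul_left π).congr fun n => ?_
    simp [pow_mul]; ring
  have := hasDerivAt_tsum_of_isPreconnected hu isOpen_Ioi isPreconnected_Ioi
    (g := fun (n : ℤ) t => Real.exp (-π * (n : ℝ) ^ 2 * t))
    (g' := fun (n : ℤ) t => -π * (n : ℝ) ^ 2 * Real.exp (-π * (n : ℝ) ^ 2 * t))
    (fun n y _ => by simpa using term_hasDerivAt 1 n y)
    (fun n y hy => ?_) hmem ?_ hmem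
  · exact this
  · rw [Real.norm_eq_abs, abs_mul, abs_of_pos (Real.exp_pos _), abs_mul, abs_neg,
      abs_of_pos pi_pos, abs_of_nonneg (sq_nonneg ((n:ℝ)))]
    exact mul_le_mul_of_nonneg_left (exp_term_mono n (le_of_lt hy)) (by positivity)
  · refine (summable_int 0 hx).congr fun n => ?_
    simp

lemma hasDerivAt_G1 {x : ℝ} (hx : 0 < x) : HasDerivAt G1 (G2 x) x := by
  have h2 : (0 : ℝ) < x / 2 := by linarith
  have hmem : x ∈ Set.Ioi (x / 2) := by simp [Set.mem_Ioi]; linarith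
  have hu : Summable (fun n : ℤ => π ^ 2 * (n : ℝ) ^ 4 * Real.exp (-π * (n : ℝ) ^ 2 * (x / 2))) := by
    refine ((summable_int 2 h2).mul_left (π ^ 2)).congr fun n => ?_
    norm_num; ring
  have := hasDerivAt_tsum_of_isPreconnected hu isOpen_Ioi isPreconnected_Ioi
    (g := fun (n : ℤ) t => -π * (n : ℝ) ^ 2 * Real.exp (-π * (n : ℝ) ^ 2 * t))
    (g' := fun (n : ℤ) t => π ^ 2 * (n : ℝ) ^ 4 * Real.exp (-π * (n : ℝ) ^ 2 * t))
    (fun n y _ => by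
      have := term_hasDerivAt (-π * (n : ℝ) ^ 2) n y
      refine this.congr_deriv ?_
      ring)
    (fun n y hy => ?_) hmem ?_ hmem
  · exact this
  · rw [Real.norm_eq_abs, abs_mul, abs_of_pos (Real.exp_pos _), abs_mul,
      abs_of_pos (by positivity : (0:ℝ) < π ^ 2)]
    have : |(n : ℝ) ^ 4| = (n : ℝ) ^ 4 := abs_of_nonneg (by positivity)
    rw [this]
    exact mul_le_mul_of_nonneg_left (exp_term_mono n (le_of_lt hy)) (by positivity)
  · refine (((summable_int 1 hx).mul_left π).neg).congr fun n => ?_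
    simp [pow_mul]; ring

lemma G_funct {x : ℝ} (hx : 0 < x) : G (1 / x) = Real.sqrt x * G x := by
  have h := Real.tsum_exp_neg_mul_int_sq hx
  have hx2 : (0 : ℝ) < x ^ (1 / 2 : ℝ) := Real.rpow_pos_of_pos hx _
  have hG : G x = ∑' n : ℤ, Real.exp (-π * x * (n : ℝ) ^ 2) := by
    unfold G; congr 1; funext n; ring_nf
  have hG' : G (1 / x) = ∑' n : ℤ, Real.exp (-π / x * (n : ℝ) ^ 2) := by
    unfold G; congr 1; funext n; congr 1; field_simp
  rw [hG, hG', h, Real.sqrt_eq_rpow, ← mul_assoc, mul_one_div, div_self (ne_of_gt hx2), one_mul]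

lemma E1 {x : ℝ} (hx : 0 < x) :
    -(x ^ 2)⁻¹ * G1 (1 / x) = 1 / (2 * Real.sqrt x) * G x + Real.sqrt x * G1 x := by
  have hx' : 0 < 1 / x := by positivity
  have h1 : HasDerivAt (fun y : ℝ => 1 / y) (-(x ^ 2)⁻¹) x := by
    simpa [one_div] using hasDerivAt_inv (ne_of_gt hx)
  have hL : HasDerivAt (fun y => G (1 / y)) (-(x ^ 2)⁻¹ * G1 (1 / x)) x := by
    have := (hasDerivAt_G hx').comp x h1
    refine this.congr_deriv ?_
    ring
  have hR : HasDerivAt (fun y => Real.sqrt y * G y)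
      (1 / (2 * Real.sqrt x) * G x + Real.sqrt x * G1 x) x :=
    (Real.hasDerivAt_sqrt (ne_of_gt hx)).mul (hasDerivAt_G hx)
  have heq : (fun y => Real.sqrt y * G y) =ᶠ[nhds x] (fun y => G (1 / y)) := by
    filter_upwards [Ioi_mem_nhds hx] with y hy
    exact (G_funct hy).symm
  exact hL.unique (hR.congr_of_eventuallyEq heq.symm)

lemma E2 {x : ℝ} (hx : 0 < x) :
    2 * (x ^ 3)⁻¹ * G1 (1 / x) + (x ^ 4)⁻¹ * G2 (1 / x) =
      -(2 * (1 / (2 * Real.sqrt x))) / (2 * Real.sqrt x) ^ 2 * G x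
        + 1 / (2 * Real.sqrt x) * G1 x
        + (1 / (2 * Real.sqrt x) * G1 x + Real.sqrt x * G2 x) := by
  have hx' : 0 < 1 / x := by positivity
  have hs0 : 0 < Real.sqrt x := Real.sqrt_pos.mpr hx
  have h1 : HasDerivAt (fun y : ℝ => 1 / y) (-(x ^ 2)⁻¹) x := by
    simpa [one_div] using hasDerivAt_inv (ne_of_gt hx)
  have hu : HasDerivAt (fun y : ℝ => -(y ^ 2)⁻¹) (2 * (x ^ 3)⁻¹) x := by
    have := ((hasDerivAt_pow 2 x).inv (pow_ne_zero 2 (ne_of_gt hx))).neg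
    refine this.congr_deriv ?_
    field_simp
    ring
  have hv : HasDerivAt (fun y => G1 (1 / y)) (-(x ^ 2)⁻¹ * G2 (1 / x)) x := by
    have := (hasDerivAt_G1 hx').comp x h1
    refine this.congr_deriv ?_
    ring
  have hL : HasDerivAt (fun y => -(y ^ 2)⁻¹ * G1 (1 / y))
      (2 * (x ^ 3)⁻¹ * G1 (1 / x) + (x ^ 4)⁻¹ * G2 (1 / x)) x := by
    have := hu.mul hv
    refine this.congr_deriv ?_
    field_simp
  have hp : HasDerivAt (fun y : ℝ => 1 / (2 * Real.sqrt y))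
      (-(2 * (1 / (2 * Real.sqrt x))) / (2 * Real.sqrt x) ^ 2) x := by
    have := ((Real.hasDerivAt_sqrt (ne_of_gt hx)).const_mul 2).inv
      (by positivity : 2 * Real.sqrt x ≠ 0)
    exact this.congr_of_eventuallyEq (Filter.Eventually.of_forall fun y => by simp [one_div])
  have hR : HasDerivAt (fun y => 1 / (2 * Real.sqrt y) * G y + Real.sqrt y * G1 y)
      (-(2 * (1 / (2 * Real.sqrt x))) / (2 * Real.sqrt x) ^ 2 * G x
        + 1 / (2 * Real.sqrt x) * G1 x
        + (1 / (2 * Real.sqrt x) * G1 x + Real.sqrt x * G2 x)) x := by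
    have := (hp.mul (hasDerivAt_G hx)).add
      ((Real.hasDerivAt_sqrt (ne_of_gt hx)).mul (hasDerivAt_G1 hx))
    exact this
  have heq : (fun y => 1 / (2 * Real.sqrt y) * G y + Real.sqrt y * G1 y) =ᶠ[nhds x]
      (fun y => -(y ^ 2)⁻¹ * G1 (1 / y)) := by
    filter_upwards [Ioi_mem_nhds hx] with y hy
    exact (E1 hy).symm
  exact hL.unique (hR.congr_of_eventuallyEq heq.symm)

lemma int_split (g : ℤ → ℝ) (hg : Summable g) (h0 : g 0 = 0)
    (heven : ∀ n : ℤ, g (-n) = g n) :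
    ∑' n : ℤ, g n = 2 * ∑' n : ℕ, g ((n : ℤ) + 1) := by
  have h1 : Summable fun n : ℕ => g n := hg.comp_injective fun a b h => by exact_mod_cast h
  have h2 : Summable fun n : ℕ => g (-((n : ℤ) + 1)) := by
    refine (h1.comp_injective (add_right_injective 1)).congr fun n => ?_
    rw [heven]; norm_num [add_comm]
  rw [tsum_of_nat_of_neg_add_one h1 h2]
  have h3 : ∑' n : ℕ, g n = g 0 + ∑' n : ℕ, g ((n : ℤ) + 1) := by
    rw [Summable.tsum_eq_zero_add h1]
    norm_num
  have h4 : (∑' n : ℕ, g (-((n : ℤ) + 1))) = ∑' n : ℕ, g ((n : ℤ) + 1) := by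
    congr 1; funext n; rw [heven]
  rw [h3, h4, h0]; ring

lemma G1_split {x : ℝ} (hx : 0 < x) :
    G1 x = 2 * ∑' n : ℕ, -π * ((n : ℝ) + 1) ^ 2 * Real.exp (-π * ((n : ℝ) + 1) ^ 2 * x) := by
  have hsum : Summable (fun n : ℤ => -π * (n : ℝ) ^ 2 * Real.exp (-π * (n : ℝ) ^ 2 * x)) := by
    refine (((summable_int 1 hx).mul_left π).neg).congr fun n => ?_
    simp [pow_mul]; ring
  rw [G1, int_split _ hsum (by norm_num) (fun n => by push_cast; ring_nf)]
  congr 1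
  exact tsum_congr fun n => by push_cast; ring_nf

lemma G2_split {x : ℝ} (hx : 0 < x) :
    G2 x = 2 * ∑' n : ℕ, π ^ 2 * ((n : ℝ) + 1) ^ 4 * Real.exp (-π * ((n : ℝ) + 1) ^ 2 * x) := by
  have hsum : Summable (fun n : ℤ => π ^ 2 * (n : ℝ) ^ 4 * Real.exp (-π * (n : ℝ) ^ 2 * x)) := by
    refine ((summable_int 2 hx).mul_left (π ^ 2)).congr fun n => ?_
    norm_num; ring
  rw [G2, int_split _ hsum (by norm_num) (fun n => by push_cast; ring_nf)]
  congr 1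
  exact tsum_congr fun n => by push_cast; ring_nf

lemma summable_shift (m : ℕ) {y : ℝ} (hy : 0 < y) (c : ℝ) :
    Summable (fun n : ℕ => c * ((n : ℝ) + 1) ^ m * Real.exp (-π * ((n : ℝ) + 1) ^ 2 * y)) := by
  have := ((summable_nat m hy).comp_injective Nat.succ_injective).mul_left c
  refine this.congr fun n => ?_
  show c * (((n + 1 : ℕ) : ℝ) ^ m * _) = _
  push_cast
  ring_nf

lemma omega_eq {y : ℝ} (hy : 0 < y) :
    omegaFn y = y ^ 2 * G2 y + 3 / 2 * y * G1 y := by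
  have hA := summable_shift 4 hy (2 * π ^ 2 * y ^ 2)
  have hB := summable_shift 2 hy (3 * π * y)
  have h1 : omegaFn y =
      (∑' n : ℕ, 2 * π ^ 2 * y ^ 2 * ((n : ℝ) + 1) ^ 4 * Real.exp (-π * ((n : ℝ) + 1) ^ 2 * y))
      - ∑' n : ℕ, 3 * π * y * ((n : ℝ) + 1) ^ 2 * Real.exp (-π * ((n : ℝ) + 1) ^ 2 * y) := by
    rw [omegaFn, ← Summable.tsum_sub hA hB]
    exact tsum_congr fun n => by ring
  have h2 : y ^ 2 * G2 y =
      ∑' n : ℕ, 2 * π ^ 2 * y ^ 2 * ((n : ℝ) + 1) ^ 4 * Real.exp (-π * ((n : ℝ) + 1) ^ 2 * y) := by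
    rw [G2_split hy, ← mul_assoc, ← tsum_mul_left]
    exact tsum_congr fun n => by ring
  have h3 : 3 / 2 * y * G1 y =
      -∑' n : ℕ, 3 * π * y * ((n : ℝ) + 1) ^ 2 * Real.exp (-π * ((n : ℝ) + 1) ^ 2 * y) := by
    rw [G1_split hy, ← mul_assoc, ← tsum_mul_left, ← tsum_neg]
    exact tsum_congr fun n => by ring
  rw [h1, h2, h3]
  ring

end OmegaAux

/-- The functional equation `ω(1/x) = √x · ω(x)` for `x > 0`. -/
theorem stmt5 (x : ℝ) (hx : 0 < x) : omegaFn (1 / x) = Real.sqrt x * omegaFn x := by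
  have hx' : 0 < 1 / x := by positivity
  have e1 := OmegaAux.E1 hx
  have e2 := OmegaAux.E2 hx
  have hs0 : 0 < Real.sqrt x := Real.sqrt_pos.mpr hx
  rw [OmegaAux.omega_eq hx', OmegaAux.omega_eq hx]
  set s := Real.sqrt x with hsdef
  have hs2 : s ^ 2 = x := Real.sq_sqrt hx.le
  rw [← hs2] at e1 e2 ⊢
  have hsne : s ≠ 0 := hs0.ne'
  field_simp at e1 e2
  have hb' : OmegaAux.G1 (1 / s ^ 2) =
      -(s ^ 3 * OmegaAux.G (s ^ 2)) / 2 - s ^ 5 * OmegaAux.G1 (s ^ 2) := by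
    have h2s : (2 * s : ℝ) ≠ 0 := by positivity
    refine mul_right_cancel₀ h2s ?_
    linear_combination (-s) * e1
  have hc' : OmegaAux.G2 (1 / s ^ 2) =
      3 / 4 * s ^ 5 * OmegaAux.G (s ^ 2) + 3 * s ^ 7 * OmegaAux.G1 (s ^ 2)
        + s ^ 9 * OmegaAux.G2 (s ^ 2) := by
    have h32 : (32 * s ^ 11 : ℝ) ≠ 0 := by positivity
    refine mul_right_cancel₀ h32 ?_
    linear_combination 8 * s ^ 11 * e2 - 64 * s ^ 13 * hb'
  rw [hb', hc']
  field_simp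
  ring
end

section
/- For every real B ≥ 1 there exists a constant C > 0 such that for all integers n ≥ 0, ∫_1^∞ e^(−Bx) · ((x−1)/(x+1))^n dx ≤ C · e^(−2√(Bn)). -/
open Real MeasureTheory

lemma ptwise (B : ℝ) (hB : 1 ≤ B) (n : ℕ) {x : ℝ} (hx : 1 < x) :
    Real.exp (-B * x) * ((x - 1) / (x + 1)) ^ n
      ≤ Real.exp (B/2 - 2 * Real.sqrt (B * n)) * Real.exp (-(B/2) * x) := by
  have hx1 : (0:ℝ) < x + 1 := by linarith
  have h0 : (0:ℝ) ≤ (x - 1) / (x + 1) := div_nonneg (by linarith) hx1.le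
  have h2 : (x - 1) / (x + 1) ≤ Real.exp (-2 / (x + 1)) := by
    have h := Real.add_one_le_exp (-2 / (x + 1))
    have heq : (x - 1) / (x + 1) = -2 / (x + 1) + 1 := by field_simp; ring
    rw [heq]; exact h
  have h4 : ((x - 1) / (x + 1)) ^ n ≤ Real.exp (-(2*n) / (x + 1)) := by
    calc ((x - 1) / (x + 1)) ^ n ≤ (Real.exp (-2 / (x + 1))) ^ n :=
          pow_le_pow_left₀ h0 h2 n
      _ = Real.exp (-(2*n) / (x + 1)) := by
          rw [← Real.exp_nat_mul]; congr 1; ring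
  set a := (B/2) * (x + 1) with ha_def
  set b := (2*n) / (x + 1) with hb_def
  have ha : 0 ≤ a := mul_nonneg (by linarith) hx1.le
  have hb : 0 ≤ b := div_nonneg (by positivity) hx1.le
  have hab : Real.sqrt a * Real.sqrt b = Real.sqrt (B * n) := by
    rw [← Real.sqrt_mul ha]
    congr 1
    rw [ha_def, hb_def]
    field_simp
  have hamgm : 2 * Real.sqrt (B * n) ≤ a + b := by
    nlinarith [sq_nonneg (Real.sqrt a - Real.sqrt b), Real.sq_sqrt ha, Real.sq_sqrt hb,
      Real.sqrt_nonneg a, Real.sqrt_nonneg b]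
  calc Real.exp (-B * x) * ((x - 1) / (x + 1)) ^ n
      ≤ Real.exp (-B * x) * Real.exp (-(2*n) / (x + 1)) :=
        mul_le_mul_of_nonneg_left h4 (Real.exp_pos _).le
    _ = Real.exp (-B * x + -(2*n) / (x + 1)) := (Real.exp_add _ _).symm
    _ ≤ Real.exp ((B/2 - 2 * Real.sqrt (B * n)) + -(B/2) * x) := by
        apply Real.exp_le_exp.mpr
        have hkey : -B * x + -(2*n)/(x+1) = -(a + b) + B/2 + -(B/2) * x := by
          rw [ha_def, hb_def]; field_simp; ring
        rw [hkey]; linarith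
    _ = Real.exp (B/2 - 2 * Real.sqrt (B * n)) * Real.exp (-(B/2) * x) :=
        Real.exp_add _ _

/-- For `B ≥ 1` there is `C > 0` with
`∫_1^∞ e^{−Bx} ((x−1)/(x+1))ⁿ dx ≤ C e^{−2√(Bn)}` for all `n ≥ 0`. -/
theorem stmt7 (B : ℝ) (hB : 1 ≤ B) :
    ∃ C > (0:ℝ), ∀ n : ℕ,
      (∫ x in Set.Ioi (1:ℝ), Real.exp (-B * x) * ((x - 1) / (x + 1)) ^ n)
        ≤ C * Real.exp (-2 * Real.sqrt (B * n)) := by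
  have hB2 : (0:ℝ) < B/2 := by linarith
  have hgint : IntegrableOn (fun x : ℝ => Real.exp (-(B/2) * x)) (Set.Ioi 1) :=
    exp_neg_integrableOn_Ioi 1 hB2
  set I := ∫ x in Set.Ioi (1:ℝ), Real.exp (-(B/2) * x) with hI
  have hIpos : 0 < I := by
    rw [hI]
    apply (setIntegral_pos_iff_support_of_nonneg_ae ?_ hgint).mpr
    · have hs : (Function.support fun x : ℝ => Real.exp (-(B/2) * x)) = Set.univ := by
        ext x; simp [Function.support, (Real.exp_pos _).ne']
      rw [hs, Set.univ_inter]
      simp [Real.volume_Ioi]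
    · filter_upwards with x using (Real.exp_pos _).le
  refine ⟨Real.exp (B/2) * I, by positivity, fun n => ?_⟩
  have hbound : ∀ x ∈ Set.Ioi (1:ℝ),
      Real.exp (-B * x) * ((x - 1) / (x + 1)) ^ n
        ≤ Real.exp (B/2 - 2 * Real.sqrt (B * n)) * Real.exp (-(B/2) * x) :=
    fun x hx => ptwise B hB n hx
  have hg2 : IntegrableOn
      (fun x : ℝ => Real.exp (B/2 - 2 * Real.sqrt (B * n)) * Real.exp (-(B/2) * x))
      (Set.Ioi 1) := hgint.const_mul _
  have hfmeas : AEStronglyMeasurable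
      (fun x : ℝ => Real.exp (-B * x) * ((x - 1) / (x + 1)) ^ n)
      (volume.restrict (Set.Ioi 1)) := by
    apply Measurable.aestronglyMeasurable
    exact ((Real.measurable_exp.comp (measurable_const.mul measurable_id)).mul
      (((measurable_id.sub measurable_const).div (measurable_id.add measurable_const)).pow_const n))
  have hfint : IntegrableOn
      (fun x : ℝ => Real.exp (-B * x) * ((x - 1) / (x + 1)) ^ n) (Set.Ioi 1) := by
    apply hg2.mono' hfmeas
    filter_upwards [ae_restrict_mem measurableSet_Ioi] with x hx
    have hx' : (1:ℝ) < x := hx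
    have hx1 : (0:ℝ) < x + 1 := by linarith
    have hq : (0:ℝ) ≤ (x-1)/(x+1) := div_nonneg (by linarith) hx1.le
    rw [Real.norm_eq_abs, abs_of_nonneg (mul_nonneg (Real.exp_pos _).le (pow_nonneg hq n))]
    exact hbound x hx
  calc (∫ x in Set.Ioi (1:ℝ), Real.exp (-B * x) * ((x - 1) / (x + 1)) ^ n)
      ≤ ∫ x in Set.Ioi (1:ℝ),
          Real.exp (B/2 - 2 * Real.sqrt (B * n)) * Real.exp (-(B/2) * x) :=
        setIntegral_mono_on hfint hg2 measurableSet_Ioi hbound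
    _ = Real.exp (B/2 - 2 * Real.sqrt (B * n)) * I := by
        rw [integral_const_mul]
    _ = Real.exp (B/2) * I * Real.exp (-2 * Real.sqrt (B * n)) := by
        have hsplit : Real.exp (B/2 - 2 * Real.sqrt (B * n))
            = Real.exp (B/2) * Real.exp (-2 * Real.sqrt (B * n)) := by
          rw [← Real.exp_add]; ring_nf
        rw [hsplit]; ring
end

section
/- Define ν(x) = ∫_0^∞ ω(u)/(u+x)^(3/2) du for x ≥ 0 and A(r) = ∫_0^∞ ω(x) e^(−πxr²) dx for r > 0, where ω(x) = ∑_{n≥1}(2π²n⁴x²−3πn²x)e^(−πn²x). Then ν(x) = 4π ∫_0^∞ A(r) r² e^(−πxr²) dr for all x > 0. -/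
set_option maxHeartbeats 1000000


open Real MeasureTheory

/-- The generalized Stieltjes transform `ν(x) = ∫_0^∞ ω(u)/(u+x)^{3/2} du`. -/
noncomputable def nuFn (x : ℝ) : ℝ :=
  ∫ u in Set.Ioi (0:ℝ), omegaFn u / (u + x) ^ ((3:ℝ)/2)

/-- The Laplace transform `A(r) = ∫_0^∞ ω(x) e^{−πxr²} dx`. -/
noncomputable def AFn (r : ℝ) : ℝ :=
  ∫ x in Set.Ioi (0:ℝ), omegaFn x * Real.exp (-π * x * r ^ 2)

section Aux

open Set Filter

/-- One term of the series defining `ω`. -/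
noncomputable def gT (n : ℕ) (u : ℝ) : ℝ :=
  (2 * π ^ 2 * (n + 1 : ℝ) ^ 4 * u ^ 2 - 3 * π * (n + 1 : ℝ) ^ 2 * u) *
      Real.exp (-π * (n + 1 : ℝ) ^ 2 * u)

lemma gT_cont (n : ℕ) : Continuous (gT n) := by
  unfold gT; fun_prop

lemma omegaFn_eq (u : ℝ) : omegaFn u = ∑' n : ℕ, gT n u := rfl

lemma integrableOn_pow_exp {b : ℝ} (hb : 0 < b) (k : ℕ) :
    IntegrableOn (fun u : ℝ => u ^ k * Real.exp (-(b * u))) (Ioi 0) := by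
  apply integrable_of_isBigO_exp_neg (half_pos hb)
    (Continuous.continuousOn (by fun_prop))
  have h1 : Tendsto (fun u : ℝ => ((b/2) * u) ^ k * Real.exp (-((b/2) * u))) atTop (nhds 0) :=
    (tendsto_pow_mul_exp_neg_atTop_nhds_zero k).comp
      (tendsto_id.const_mul_atTop (half_pos hb))
  have h2 : Tendsto (fun u : ℝ => u ^ k * Real.exp (-((b/2) * u))) atTop (nhds 0) := by
    have h3 := h1.const_mul ((1:ℝ)/(b/2) ^ k)
    rw [mul_zero] at h3
    refine h3.congr fun u => ?_
    have hbk : ((b/2):ℝ) ^ k ≠ 0 := by positivity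
    field_simp [mul_pow]
    ring
  have ho : (fun u : ℝ => u ^ k * Real.exp (-(b * u)))
      =o[atTop] fun u : ℝ => Real.exp (-(b/2) * u) := by
    rw [Asymptotics.isLittleO_iff_tendsto fun u h => absurd h (Real.exp_ne_zero _)]
    refine h2.congr fun u => ?_
    rw [mul_div_assoc, ← Real.exp_sub]
    congr 2
    ring
  exact ho.isBigO

lemma integrableOn_mul_exp {b : ℝ} (hb : 0 < b) :
    IntegrableOn (fun u : ℝ => u * Real.exp (-(b * u))) (Ioi 0) := by
  simpa using integrableOn_pow_exp hb 1

lemma integral_mul_exp {b : ℝ} (hb : 0 < b) :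
    ∫ u in Ioi (0:ℝ), u * Real.exp (-(b * u)) = 1 / b ^ 2 := by
  have h := Real.integral_rpow_mul_exp_neg_mul_Ioi (by norm_num : (0:ℝ) < 2) hb
  rw [show (2:ℝ) - 1 = 1 by norm_num] at h
  simp only [Real.rpow_one] at h
  rw [h, show (2:ℝ) = ((2:ℕ):ℝ) by norm_num, Real.rpow_natCast,
    show Real.Gamma ((2:ℕ):ℝ) = 1 by
      rw [show (((2:ℕ)):ℝ) = ((1:ℕ):ℝ) + 1 by norm_num, Real.Gamma_nat_eq_factorial]; norm_num]
  rw [div_pow, one_pow, mul_one]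

lemma integral_sq_exp {b : ℝ} (hb : 0 < b) :
    ∫ u in Ioi (0:ℝ), u ^ 2 * Real.exp (-(b * u)) = 2 / b ^ 3 := by
  have h := Real.integral_rpow_mul_exp_neg_mul_Ioi (by norm_num : (0:ℝ) < 3) hb
  rw [show (3:ℝ) - 1 = ((2:ℕ):ℝ) by norm_num] at h
  simp only [Real.rpow_natCast] at h
  rw [h, show (3:ℝ) = ((3:ℕ):ℝ) by norm_num, Real.rpow_natCast,
    show Real.Gamma ((3:ℕ):ℝ) = 2 by
      rw [show (((3:ℕ)):ℝ) = ((2:ℕ):ℝ) + 1 by norm_num, Real.Gamma_nat_eq_factorial]; norm_num]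
  rw [div_pow, one_pow]
  ring

lemma mpos (n : ℕ) : (0:ℝ) < π * (n + 1 : ℝ) ^ 2 := by positivity

lemma gT_eq (n : ℕ) (u : ℝ) :
    gT n u = 2 * π ^ 2 * (n + 1 : ℝ) ^ 4 * (u ^ 2 * Real.exp (-(π * (n + 1 : ℝ) ^ 2 * u)))
      - 3 * π * (n + 1 : ℝ) ^ 2 * (u * Real.exp (-(π * (n + 1 : ℝ) ^ 2 * u))) := by
  unfold gT
  rw [show -π * (n + 1 : ℝ) ^ 2 * u = -(π * (n + 1 : ℝ) ^ 2 * u) by ring]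
  ring

lemma gT_integrableOn (n : ℕ) : IntegrableOn (gT n) (Ioi 0) := by
  have h := ((integrableOn_pow_exp (mpos n) 2).const_mul (2 * π ^ 2 * (n + 1 : ℝ) ^ 4)).sub
    ((integrableOn_mul_exp (mpos n)).const_mul (3 * π * (n + 1 : ℝ) ^ 2))
  exact IntegrableOn.congr_fun h
    (fun u _ => by simp only [Pi.sub_apply]; exact (gT_eq n u).symm) measurableSet_Ioi

lemma gT_norm_integral (n : ℕ) :
    ∫ u in Ioi (0:ℝ), ‖gT n u‖ ≤ 7 / (π * (n + 1 : ℝ) ^ 2) := by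
  set m : ℝ := (n + 1 : ℝ) with hm
  have hm0 : (0:ℝ) < m := by positivity
  set B : ℝ → ℝ := fun u =>
    2 * π ^ 2 * m ^ 4 * (u ^ 2 * Real.exp (-(π * m ^ 2 * u)))
      + 3 * π * m ^ 2 * (u * Real.exp (-(π * m ^ 2 * u))) with hB
  have hBint : IntegrableOn B (Ioi 0) :=
    ((integrableOn_pow_exp (mpos n) 2).const_mul _).add
      ((integrableOn_mul_exp (mpos n)).const_mul _)
  have hBval : ∫ u in Ioi (0:ℝ), B u = 7 / (π * m ^ 2) := by
    rw [hB]
    rw [integral_add ((integrableOn_pow_exp (mpos n) 2).const_mul _)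
      ((integrableOn_mul_exp (mpos n)).const_mul _), integral_const_mul, integral_const_mul,
      integral_sq_exp (mpos n), integral_mul_exp (mpos n)]
    have hπ : π ≠ 0 := pi_ne_zero
    have : m ≠ 0 := ne_of_gt hm0
    field_simp
    ring
  have hle : ∫ u in Ioi (0:ℝ), ‖gT n u‖ ≤ ∫ u in Ioi (0:ℝ), B u := by
    refine setIntegral_mono_on (gT_integrableOn n).norm hBint measurableSet_Ioi ?_
    intro u hu
    have hu0 : (0:ℝ) ≤ u := (le_of_lt hu)
    rw [gT_eq n u, hB]
    calc ‖2 * π ^ 2 * m ^ 4 * (u ^ 2 * Real.exp (-(π * m ^ 2 * u)))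
          - 3 * π * m ^ 2 * (u * Real.exp (-(π * m ^ 2 * u)))‖
        ≤ ‖2 * π ^ 2 * m ^ 4 * (u ^ 2 * Real.exp (-(π * m ^ 2 * u)))‖
          + ‖3 * π * m ^ 2 * (u * Real.exp (-(π * m ^ 2 * u)))‖ := norm_sub_le _ _
      _ = 2 * π ^ 2 * m ^ 4 * (u ^ 2 * Real.exp (-(π * m ^ 2 * u)))
          + 3 * π * m ^ 2 * (u * Real.exp (-(π * m ^ 2 * u))) := by
          rw [Real.norm_eq_abs, Real.norm_eq_abs, abs_of_nonneg (by positivity),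
            abs_of_nonneg (by positivity)]
  exact hle.trans (le_of_eq hBval)

lemma integrableOn_sq_gauss {b : ℝ} (hb : 0 < b) :
    IntegrableOn (fun r : ℝ => r ^ 2 * Real.exp (-b * r ^ 2)) (Ioi 0) := by
  have h := integrableOn_rpow_mul_exp_neg_mul_sq hb (by norm_num : (-1:ℝ) < 2)
  refine h.congr_fun (fun r hr => ?_) measurableSet_Ioi
  dsimp only
  rw [show ((2:ℝ)) = ((2:ℕ):ℝ) by norm_num, Real.rpow_natCast]

lemma gauss_moment {a : ℝ} (ha : 0 < a) :
    ∫ r in Ioi (0:ℝ), r ^ 2 * Real.exp (-(π * a) * r ^ 2)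
      = 1 / (4 * π) * (a ^ ((3:ℝ)/2))⁻¹ := by
  have hb : (0:ℝ) < π * a := by positivity
  have h := integral_rpow_mul_exp_neg_mul_rpow (by norm_num : (0:ℝ) < 2)
    (by norm_num : (-1:ℝ) < 2) hb
  have hL : ∫ r in Ioi (0:ℝ), r ^ 2 * Real.exp (-(π * a) * r ^ 2)
      = ∫ r in Ioi (0:ℝ), r ^ ((2:ℝ)) * Real.exp (-(π * a) * r ^ ((2:ℝ))) := by
    refine setIntegral_congr_fun measurableSet_Ioi (fun r hr => ?_)
    rw [show ((2:ℝ)) = ((2:ℕ):ℝ) by norm_num, Real.rpow_natCast]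
  rw [hL, h]
  have hG : Real.Gamma ((2 + 1)/2) = √π / 2 := by
    rw [show ((2:ℝ) + 1)/2 = 1/2 + 1 by norm_num, Real.Gamma_add_one (by norm_num),
      Real.Gamma_one_half_eq]
    ring
  rw [hG]
  rw [show (-((2:ℝ) + 1)/2) = -((3:ℝ)/2) by norm_num]
  rw [Real.mul_rpow pi_pos.le ha.le, Real.sqrt_eq_rpow]
  rw [Real.rpow_neg pi_pos.le, Real.rpow_neg ha.le]
  have hππ : (π : ℝ) ^ ((3:ℝ)/2) = π ^ ((1:ℝ)/2) * π := by
    rw [show ((3:ℝ)/2) = (1:ℝ)/2 + 1 by norm_num, Real.rpow_add pi_pos, Real.rpow_one]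
  rw [hππ]
  have h1 : (π : ℝ) ^ ((1:ℝ)/2) ≠ 0 := by positivity
  have h2 : (a : ℝ) ^ ((3:ℝ)/2) ≠ 0 := by positivity
  field_simp
  ring

lemma summable_aux (c : ℝ) : Summable (fun n : ℕ => c * (7 / (π * (n + 1 : ℝ) ^ 2))) := by
  have h1 : Summable (fun n : ℕ => 1 / ((n:ℝ) + 1) ^ 2) := by
    have h0 : Summable (fun n : ℕ => 1 / (n:ℝ) ^ 2) :=
      Real.summable_one_div_nat_pow.mpr one_lt_two
    have := (summable_nat_add_iff 1).mpr h0
    refine this.congr fun n => ?_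
    push_cast
    ring
  refine (h1.mul_left (c * (7 / π))).congr fun n => ?_
  have hπ : π ≠ 0 := pi_ne_zero
  have : ((n:ℝ) + 1) ^ 2 ≠ 0 := by positivity
  field_simp

lemma swap1 {w : ℝ → ℝ} (hw : AEStronglyMeasurable w (volume.restrict (Ioi 0)))
    {C : ℝ} (hC : ∀ u ∈ Ioi (0:ℝ), |w u| ≤ C) :
    ∫ u in Ioi (0:ℝ), omegaFn u * w u = ∑' n : ℕ, ∫ u in Ioi (0:ℝ), gT n u * w u := by
  have hC0 : 0 ≤ C := le_trans (abs_nonneg _) (hC 1 (by norm_num))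
  have hint : ∀ n : ℕ, Integrable (fun u => gT n u * w u) (volume.restrict (Ioi 0)) := by
    intro n
    refine Integrable.mono' ((gT_integrableOn n).norm.const_mul C)
      (((gT_cont n).aestronglyMeasurable.restrict).mul hw) ?_
    filter_upwards [ae_restrict_mem measurableSet_Ioi] with u hu
    rw [norm_mul]
    calc ‖gT n u‖ * ‖w u‖ ≤ ‖gT n u‖ * C :=
          mul_le_mul_of_nonneg_left (by rw [Real.norm_eq_abs]; exact hC u hu) (norm_nonneg _)
      _ = C * ‖gT n u‖ := mul_comm _ _
  have hnorm : ∀ n : ℕ, ∫ u in Ioi (0:ℝ), ‖gT n u * w u‖ ≤ C * (7 / (π * (n + 1 : ℝ) ^ 2)) := by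
    intro n
    have h1 : ∫ u in Ioi (0:ℝ), ‖gT n u * w u‖ ≤ ∫ u in Ioi (0:ℝ), ‖gT n u‖ * C := by
      refine setIntegral_mono_on (hint n).norm ((gT_integrableOn n).norm.mul_const C)
        measurableSet_Ioi ?_
      intro u hu
      rw [norm_mul]
      exact mul_le_mul_of_nonneg_left (by rw [Real.norm_eq_abs]; exact hC u hu) (norm_nonneg _)
    rw [integral_mul_const] at h1
    calc ∫ u in Ioi (0:ℝ), ‖gT n u * w u‖ ≤ (∫ u in Ioi (0:ℝ), ‖gT n u‖) * C := h1
      _ ≤ (7 / (π * (n + 1 : ℝ) ^ 2)) * C :=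
          mul_le_mul_of_nonneg_right (gT_norm_integral n) hC0
      _ = C * (7 / (π * (n + 1 : ℝ) ^ 2)) := mul_comm _ _
  have hsum : Summable (fun n : ℕ => ∫ u in Ioi (0:ℝ), ‖gT n u * w u‖) :=
    Summable.of_nonneg_of_le (fun n => integral_nonneg fun u => norm_nonneg _)
      hnorm (summable_aux C)
  have hrw : ∀ u : ℝ, omegaFn u * w u = ∑' n : ℕ, gT n u * w u := fun u => by
    rw [omegaFn_eq, ← tsum_mul_right]
  simp_rw [hrw]
  exact (integral_tsum_of_summable_integral_norm hint hsum).symm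

/-- The Laplace transform of a single term. -/
noncomputable def JT (n : ℕ) (r : ℝ) : ℝ :=
  ∫ u in Ioi (0:ℝ), gT n u * Real.exp (-π * u * r ^ 2)

lemma JT_eq (n : ℕ) (r : ℝ) :
    JT n r = 4 * (n + 1 : ℝ) ^ 4 / (π * ((n + 1 : ℝ) ^ 2 + r ^ 2) ^ 3)
      - 3 * (n + 1 : ℝ) ^ 2 / (π * ((n + 1 : ℝ) ^ 2 + r ^ 2) ^ 2) := by
  set m : ℝ := (n + 1 : ℝ) with hm
  have hm0 : (0:ℝ) < m := by positivity
  have hb : (0:ℝ) < π * (m ^ 2 + r ^ 2) := by positivity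
  have h1 : ∀ u : ℝ, gT n u * Real.exp (-π * u * r ^ 2)
      = 2 * π ^ 2 * m ^ 4 * (u ^ 2 * Real.exp (-(π * (m ^ 2 + r ^ 2) * u)))
        - 3 * π * m ^ 2 * (u * Real.exp (-(π * (m ^ 2 + r ^ 2) * u))) := by
    intro u
    rw [gT_eq n u]
    have he : Real.exp (-(π * m ^ 2 * u)) * Real.exp (-π * u * r ^ 2)
        = Real.exp (-(π * (m ^ 2 + r ^ 2) * u)) := by
      rw [← Real.exp_add]; congr 1; ring
    rw [← he]
    ring
  unfold JT
  rw [integral_congr_ae (Filter.Eventually.of_forall h1)]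
  rw [integral_sub ((integrableOn_pow_exp hb 2).const_mul _)
    ((integrableOn_mul_exp hb).const_mul _), integral_const_mul, integral_const_mul,
    integral_sq_exp hb, integral_mul_exp hb]
  have hπ : π ≠ 0 := pi_ne_zero
  have hc : m ^ 2 + r ^ 2 ≠ 0 := by positivity
  field_simp
  ring

lemma JT_cont (n : ℕ) : Continuous (JT n) := by
  have : JT n = fun r => 4 * (n + 1 : ℝ) ^ 4 / (π * ((n + 1 : ℝ) ^ 2 + r ^ 2) ^ 3)
      - 3 * (n + 1 : ℝ) ^ 2 / (π * ((n + 1 : ℝ) ^ 2 + r ^ 2) ^ 2) := funext (JT_eq n)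
  rw [this]
  have hm0 : (0:ℝ) < (n + 1 : ℝ) := by positivity
  refine Continuous.sub ?_ ?_ <;>
    exact Continuous.div continuous_const (by fun_prop) (fun r => by positivity)

lemma JT_bound (n : ℕ) (r : ℝ) : ‖JT n r‖ ≤ 7 / (π * (n + 1 : ℝ) ^ 2) := by
  have hGint : Integrable (fun u => gT n u * Real.exp (-π * u * r ^ 2))
      (volume.restrict (Ioi 0)) := by
    refine Integrable.mono' (gT_integrableOn n).norm
      (((gT_cont n).mul (by fun_prop)).aestronglyMeasurable.restrict) ?_
    filter_upwards [ae_restrict_mem measurableSet_Ioi] with u hu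
    rw [norm_mul]
    have hu0 : (0:ℝ) < u := hu
    have h1 : ‖Real.exp (-π * u * r ^ 2)‖ ≤ 1 := by
      rw [Real.norm_eq_abs, abs_of_pos (Real.exp_pos _)]
      refine Real.exp_le_one_iff.mpr ?_
      have : (0:ℝ) ≤ π * u * r ^ 2 := by positivity
      linarith [this]
    calc ‖gT n u‖ * ‖Real.exp (-π * u * r ^ 2)‖ ≤ ‖gT n u‖ * 1 :=
          mul_le_mul_of_nonneg_left h1 (norm_nonneg _)
      _ = ‖gT n u‖ := mul_one _
  refine le_trans (norm_integral_le_integral_norm _) (le_trans ?_ (gT_norm_integral n))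
  refine setIntegral_mono_on hGint.norm (gT_integrableOn n).norm measurableSet_Ioi ?_
  intro u hu
  rw [norm_mul]
  have h1 : ‖Real.exp (-π * u * r ^ 2)‖ ≤ 1 := by
    rw [Real.norm_eq_abs, abs_of_pos (Real.exp_pos _)]
    refine Real.exp_le_one_iff.mpr ?_
    have hu0 : (0:ℝ) < u := hu
    have : (0:ℝ) ≤ π * u * r ^ 2 := by positivity
    linarith [this]
  calc ‖gT n u‖ * ‖Real.exp (-π * u * r ^ 2)‖ ≤ ‖gT n u‖ * 1 :=
        mul_le_mul_of_nonneg_left h1 (norm_nonneg _)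
    _ = ‖gT n u‖ := mul_one _

lemma per_n (x : ℝ) (hx : 0 < x) (n : ℕ) :
    ∫ u in Ioi (0:ℝ), gT n u * ((u + x) ^ ((3:ℝ)/2))⁻¹
      = 4 * π * ∫ r in Ioi (0:ℝ), JT n r * r ^ 2 * Real.exp (-π * x * r ^ 2) := by
  have hKm : AEStronglyMeasurable
      (fun p : ℝ × ℝ => gT n p.1 * (p.2 ^ 2 * Real.exp (-(π * (p.1 + x)) * p.2 ^ 2)))
      ((volume.restrict (Ioi 0)).prod (volume.restrict (Ioi 0))) := by
    apply Continuous.aestronglyMeasurable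
    have hgc := gT_cont n
    exact (hgc.comp continuous_fst).mul
      (((continuous_pow 2).comp continuous_snd).mul
        (Real.continuous_exp.comp (by fun_prop)))
  have hint : Integrable
      (fun p : ℝ × ℝ => gT n p.1 * (p.2 ^ 2 * Real.exp (-(π * (p.1 + x)) * p.2 ^ 2)))
      ((volume.restrict (Ioi 0)).prod (volume.restrict (Ioi 0))) := by
    rw [integrable_prod_iff hKm]
    constructor
    · filter_upwards [ae_restrict_mem measurableSet_Ioi] with u hu
      have hu0 : (0:ℝ) < u := hu
      exact (integrableOn_sq_gauss (by positivity : (0:ℝ) < π * (u + x))).const_mul _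
    · have heq : ∀ u ∈ Ioi (0:ℝ),
          (∫ r in Ioi (0:ℝ), ‖gT n u * (r ^ 2 * Real.exp (-(π * (u + x)) * r ^ 2))‖)
          = ‖gT n u‖ * (1 / (4 * π) * (((u + x) ^ ((3:ℝ)/2))⁻¹)) := by
        intro u hu
        have hu0 : (0:ℝ) < u := hu
        have h0 : (0:ℝ) < u + x := by positivity
        have hstep : ∫ r in Ioi (0:ℝ), ‖gT n u * (r ^ 2 * Real.exp (-(π * (u + x)) * r ^ 2))‖
            = ∫ r in Ioi (0:ℝ), ‖gT n u‖ * (r ^ 2 * Real.exp (-(π * (u + x)) * r ^ 2)) := by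
          refine setIntegral_congr_fun measurableSet_Ioi (fun r hr => ?_)
          rw [norm_mul]
          congr 1
          rw [norm_mul, Real.norm_eq_abs, Real.norm_eq_abs,
            abs_of_nonneg (by positivity : (0:ℝ) ≤ r ^ 2), abs_of_pos (Real.exp_pos _)]
        rw [hstep, integral_const_mul, gauss_moment h0]
      have hexp : Integrable
          (fun u => ‖gT n u‖ * (1 / (4 * π) * (((u + x) ^ ((3:ℝ)/2))⁻¹)))
          (volume.restrict (Ioi 0)) := by
        refine Integrable.mono' ((gT_integrableOn n).norm.const_mul
          (1 / (4 * π) * ((x ^ ((3:ℝ)/2))⁻¹))) ?_ ?_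
        · refine AEStronglyMeasurable.mul ((gT_cont n).norm.aestronglyMeasurable.restrict) ?_
          refine Measurable.aestronglyMeasurable ?_
          exact (measurable_const.mul
            (((continuous_id.add continuous_const).rpow_const
              (fun u => Or.inr (by norm_num))).measurable.inv))
        · filter_upwards [ae_restrict_mem measurableSet_Ioi] with u hu
          have hu0 : (0:ℝ) < u := hu
          have h0 : (0:ℝ) < u + x := by positivity
          have hpow : x ^ ((3:ℝ)/2) ≤ (u + x) ^ ((3:ℝ)/2) :=
            Real.rpow_le_rpow hx.le (by linarith) (by norm_num)
          have hxp : (0:ℝ) < x ^ ((3:ℝ)/2) := Real.rpow_pos_of_pos hx _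
          have hinv : ((u + x) ^ ((3:ℝ)/2))⁻¹ ≤ (x ^ ((3:ℝ)/2))⁻¹ :=
            inv_anti₀ hxp hpow
          rw [Real.norm_eq_abs, abs_of_nonneg (by positivity)]
          calc ‖gT n u‖ * (1 / (4 * π) * (((u + x) ^ ((3:ℝ)/2))⁻¹))
              ≤ ‖gT n u‖ * (1 / (4 * π) * ((x ^ ((3:ℝ)/2))⁻¹)) := by
                refine mul_le_mul_of_nonneg_left ?_ (norm_nonneg _)
                refine mul_le_mul_of_nonneg_left hinv (by positivity)
            _ = 1 / (4 * π) * ((x ^ ((3:ℝ)/2))⁻¹) * ‖gT n u‖ := by ring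
      exact hexp.congr ((ae_restrict_mem measurableSet_Ioi).mono
        (fun u hu => (heq u hu).symm))
  have hswap := integral_integral_swap
    (f := fun u r => gT n u * (r ^ 2 * Real.exp (-(π * (u + x)) * r ^ 2))) hint
  have hR : ∫ r in Ioi (0:ℝ), JT n r * r ^ 2 * Real.exp (-π * x * r ^ 2)
      = ∫ r in Ioi (0:ℝ), ∫ u in Ioi (0:ℝ),
          gT n u * (r ^ 2 * Real.exp (-(π * (u + x)) * r ^ 2)) := by
    refine setIntegral_congr_fun measurableSet_Ioi (fun r hr => ?_)
    unfold JT
    rw [mul_assoc, ← integral_mul_const]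
    refine setIntegral_congr_fun measurableSet_Ioi (fun u hu => ?_)
    have he : Real.exp (-π * u * r ^ 2) * Real.exp (-π * x * r ^ 2)
        = Real.exp (-(π * (u + x)) * r ^ 2) := by
      rw [← Real.exp_add]; congr 1; ring
    calc gT n u * Real.exp (-π * u * r ^ 2) * (r ^ 2 * Real.exp (-π * x * r ^ 2))
        = gT n u * (r ^ 2 * (Real.exp (-π * u * r ^ 2) * Real.exp (-π * x * r ^ 2))) := by ring
      _ = gT n u * (r ^ 2 * Real.exp (-(π * (u + x)) * r ^ 2)) := by rw [he]
  have hL : ∫ u in Ioi (0:ℝ), ∫ r in Ioi (0:ℝ),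
        gT n u * (r ^ 2 * Real.exp (-(π * (u + x)) * r ^ 2))
      = ∫ u in Ioi (0:ℝ), gT n u * (1 / (4 * π) * (((u + x) ^ ((3:ℝ)/2))⁻¹)) := by
    refine setIntegral_congr_fun measurableSet_Ioi (fun u hu => ?_)
    have hu0 : (0:ℝ) < u := hu
    have h0 : (0:ℝ) < u + x := by positivity
    rw [integral_const_mul, gauss_moment h0]
  rw [hR, ← hswap, hL]
  have hfin : ∀ u : ℝ, gT n u * (1 / (4 * π) * (((u + x) ^ ((3:ℝ)/2))⁻¹))
      = 1 / (4 * π) * (gT n u * ((u + x) ^ ((3:ℝ)/2))⁻¹) := fun u => by ring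
  simp_rw [hfin]
  rw [integral_const_mul]
  have hπ : π ≠ 0 := pi_ne_zero
  field_simp


end Aux

/-- `ν(x) = 4π ∫_0^∞ A(r) r² e^{−πxr²} dr` for `x > 0`. -/
theorem stmt11 (x : ℝ) (hx : 0 < x) :
    nuFn x = 4 * π * ∫ r in Set.Ioi (0:ℝ), AFn r * r ^ 2 * Real.exp (-π * x * r ^ 2) := by
  have hxp : (0:ℝ) < x ^ ((3:ℝ)/2) := Real.rpow_pos_of_pos hx _
  -- Step A : expand ν as a sum
  have hA : nuFn x = ∑' n : ℕ, ∫ u in Set.Ioi (0:ℝ), gT n u * ((u + x) ^ ((3:ℝ)/2))⁻¹ := by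
    unfold nuFn
    simp_rw [div_eq_mul_inv]
    refine swap1 ?_ (C := (x ^ ((3:ℝ)/2))⁻¹) ?_
    · refine Measurable.aestronglyMeasurable ?_
      exact ((continuous_id.add continuous_const).rpow_const
        (fun u => Or.inr (by norm_num))).measurable.inv
    · intro u hu
      have hu0 : (0:ℝ) < u := hu
      have h0 : (0:ℝ) < u + x := by positivity
      have hpow : x ^ ((3:ℝ)/2) ≤ (u + x) ^ ((3:ℝ)/2) :=
        Real.rpow_le_rpow hx.le (by linarith) (by norm_num)
      rw [abs_of_pos (inv_pos.mpr (Real.rpow_pos_of_pos h0 _))]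
      exact inv_anti₀ hxp hpow
  -- Step B : expand A as a sum
  have hB : ∀ r : ℝ, AFn r = ∑' n : ℕ, JT n r := by
    intro r
    refine swap1 (Continuous.aestronglyMeasurable (by fun_prop)).restrict (C := 1) ?_
    intro u hu
    have hu0 : (0:ℝ) < u := hu
    rw [abs_of_pos (Real.exp_pos _)]
    refine Real.exp_le_one_iff.mpr ?_
    have : (0:ℝ) ≤ π * u * r ^ 2 := by positivity
    linarith
  -- Step D : swap the sum and the outer integral
  have hgx : IntegrableOn (fun r : ℝ => r ^ 2 * Real.exp (-(π * x) * r ^ 2)) (Set.Ioi 0) :=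
    integrableOn_sq_gauss (by positivity)
  have hFint : ∀ n : ℕ, Integrable
      (fun r => JT n r * r ^ 2 * Real.exp (-π * x * r ^ 2))
      (volume.restrict (Set.Ioi 0)) := by
    intro n
    have h1 : Integrable (fun r => JT n r * (r ^ 2 * Real.exp (-(π * x) * r ^ 2)))
        (volume.restrict (Set.Ioi 0)) :=
      Integrable.bdd_mul hgx (JT_cont n).aestronglyMeasurable.restrict
        (c := 7 / (π * (n + 1 : ℝ) ^ 2)) (Filter.Eventually.of_forall (JT_bound n))
    refine h1.congr (Filter.Eventually.of_forall fun r => ?_)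
    show JT n r * (r ^ 2 * Real.exp (-(π * x) * r ^ 2))
      = JT n r * r ^ 2 * Real.exp (-π * x * r ^ 2)
    rw [show -(π * x) * r ^ 2 = -π * x * r ^ 2 by ring]
    ring
  have hFsum : Summable
      (fun n : ℕ => ∫ r in Set.Ioi (0:ℝ), ‖JT n r * r ^ 2 * Real.exp (-π * x * r ^ 2)‖) := by
    set c : ℝ := ∫ r in Set.Ioi (0:ℝ), r ^ 2 * Real.exp (-(π * x) * r ^ 2) with hc
    refine Summable.of_nonneg_of_le
      (fun n => integral_nonneg fun r => norm_nonneg _) (fun n => ?_) (summable_aux c)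
    have h1 : ∫ r in Set.Ioi (0:ℝ), ‖JT n r * r ^ 2 * Real.exp (-π * x * r ^ 2)‖
        ≤ ∫ r in Set.Ioi (0:ℝ),
            (7 / (π * (n + 1 : ℝ) ^ 2)) * (r ^ 2 * Real.exp (-(π * x) * r ^ 2)) := by
      refine setIntegral_mono_on (hFint n).norm (hgx.const_mul _) measurableSet_Ioi ?_
      intro r hr
      have hr0 : (0:ℝ) < r := hr
      rw [norm_mul, norm_mul]
      have he : ‖Real.exp (-π * x * r ^ 2)‖ = Real.exp (-(π * x) * r ^ 2) := by
        rw [Real.norm_eq_abs, abs_of_pos (Real.exp_pos _)]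
        congr 1
        ring
      rw [he, Real.norm_eq_abs (r ^ 2), abs_of_nonneg (by positivity : (0:ℝ) ≤ r ^ 2)]
      calc ‖JT n r‖ * r ^ 2 * Real.exp (-(π * x) * r ^ 2)
          ≤ (7 / (π * (n + 1 : ℝ) ^ 2)) * r ^ 2 * Real.exp (-(π * x) * r ^ 2) := by
            refine mul_le_mul_of_nonneg_right
              (mul_le_mul_of_nonneg_right (JT_bound n r) (by positivity)) (Real.exp_pos _).le
        _ = (7 / (π * (n + 1 : ℝ) ^ 2)) * (r ^ 2 * Real.exp (-(π * x) * r ^ 2)) := by ring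
    rw [integral_const_mul] at h1
    calc ∫ r in Set.Ioi (0:ℝ), ‖JT n r * r ^ 2 * Real.exp (-π * x * r ^ 2)‖
        ≤ (7 / (π * (n + 1 : ℝ) ^ 2)) * c := h1
      _ = c * (7 / (π * (n + 1 : ℝ) ^ 2)) := mul_comm _ _
  have hD : ∫ r in Set.Ioi (0:ℝ), AFn r * r ^ 2 * Real.exp (-π * x * r ^ 2)
      = ∑' n : ℕ, ∫ r in Set.Ioi (0:ℝ), JT n r * r ^ 2 * Real.exp (-π * x * r ^ 2) := by
    have hrw : ∀ r : ℝ, AFn r * r ^ 2 * Real.exp (-π * x * r ^ 2)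
        = ∑' n : ℕ, JT n r * r ^ 2 * Real.exp (-π * x * r ^ 2) := by
      intro r
      rw [hB r, ← tsum_mul_right, ← tsum_mul_right]
    simp_rw [hrw]
    exact (integral_tsum_of_summable_integral_norm hFint hFsum).symm
  rw [hA, hD, ← tsum_mul_left]
  exact tsum_congr fun n => per_n x hx n
end

section
/- Let H_n be the Hermite polynomials defined by H_n(x) = (−1)^n e^(x²) (d/dx)^n e^(−x²). For any compact set K ⊂ ℂ there is a constant C > 0 such that |H_n(t)| ≤ C·exp((3/4)·n·log n) for all n ≥ 1 and all t ∈ K. -/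
open Real

open Polynomial in
noncomputable def HP : ℕ → Polynomial ℂ
  | 0 => 1
  | n+1 => 2 * X * HP n - (HP n).derivative

open Polynomial in
lemma HP_deriv : ∀ n : ℕ, (HP (n+1)).derivative = (2*(n+1) : ℕ) * HP n := by
  intro n
  induction n with
  | zero =>
    show (2 * X * HP 0 - (HP 0).derivative).derivative = _
    simp [HP]
  | succ n ih =>
    have h2 : (HP (n+2) : Polynomial ℂ) = 2 * X * HP (n+1) - (HP (n+1)).derivative := rfl
    have h1 : (HP (n+1) : Polynomial ℂ) = 2 * X * HP n - (HP n).derivative := rfl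
    rw [h2]
    simp only [derivative_sub, derivative_mul, ih, derivative_natCast, derivative_X,
      derivative_ofNat, derivative_one]
    rw [h1]
    push_cast
    ring

lemma rodrigues (n : ℕ) (x : ℂ) :
    iteratedDeriv n (fun y => Complex.exp (-y^2)) x
      = (-1)^n * (HP n).eval x * Complex.exp (-x^2) := by
  induction n generalizing x with
  | zero => simp [HP]
  | succ n ih =>
    rw [iteratedDeriv_succ]
    have hfun : iteratedDeriv n (fun y => Complex.exp (-y^2))
        = fun x => (-1)^n * (HP n).eval x * Complex.exp (-x^2) := funext ih
    rw [hfun]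
    have h1 : HasDerivAt (fun x : ℂ => (-1:ℂ)^n * (HP n).eval x * Complex.exp (-x^2))
        ((-1)^n * ((HP n).derivative.eval x * Complex.exp (-x^2)
          + (HP n).eval x * ((-2*x) * Complex.exp (-x^2)))) x := by
      have hp : HasDerivAt (fun x : ℂ => (HP n).eval x) ((HP n).derivative.eval x) x :=
        (HP n).hasDerivAt x
      have he : HasDerivAt (fun x : ℂ => Complex.exp (-x^2)) ((-2*x) * Complex.exp (-x^2)) x := by
        have h2 : HasDerivAt (fun x : ℂ => -x^2) (-2*x) x := by
          simpa [Pi.neg_def] using ((hasDerivAt_pow 2 x).neg)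
        simpa [mul_comm, Function.comp_def] using (Complex.hasDerivAt_exp (-x^2)).comp x h2
      simpa [mul_assoc, mul_add] using (hp.mul he).const_mul ((-1:ℂ)^n)
    rw [h1.deriv]
    show (-1:ℂ)^n * _ = (-1)^(n+1) * (Polynomial.eval x (2 * Polynomial.X * HP n - (HP n).derivative)) * _
    simp [pow_succ]
    ring

/-- The (physicists') Hermite polynomials, via the Rodrigues formula
`H_n(x) = (−1)ⁿ e^{x²} (d/dx)ⁿ e^{−x²}`, extended to the complex plane. -/
noncomputable def hermiteH (n : ℕ) (x : ℂ) : ℂ :=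
  (-1) ^ n * Complex.exp (x ^ 2) * iteratedDeriv n (fun y => Complex.exp (-y ^ 2)) x

lemma hermiteH_eq (n : ℕ) (x : ℂ) : hermiteH n x = (HP n).eval x := by
  rw [hermiteH, rodrigues]
  have h : Complex.exp (x^2) * Complex.exp (-x^2) = 1 := by
    rw [← Complex.exp_add]; simp
  calc (-1:ℂ)^n * Complex.exp (x^2) * ((-1)^n * (HP n).eval x * Complex.exp (-x^2))
      = ((-1:ℂ)^n * (-1)^n) * (Complex.exp (x^2) * Complex.exp (-x^2)) * (HP n).eval x := by ring
    _ = (HP n).eval x := by rw [h, ← pow_add]; simp [pow_mul]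

lemma hermiteH_zero (x : ℂ) : hermiteH 0 x = 1 := by simp [hermiteH_eq, HP]

lemma hermiteH_one (x : ℂ) : hermiteH 1 x = 2 * x := by
  rw [hermiteH_eq]
  show Polynomial.eval x ((2 * Polynomial.X * HP 0 - (HP 0).derivative)) = 2*x
  simp [HP]

lemma hermiteH_rec (n : ℕ) (x : ℂ) :
    hermiteH (n+2) x = 2 * x * hermiteH (n+1) x - (2*(n+1) : ℕ) * hermiteH n x := by
  simp only [hermiteH_eq]
  have h2 : (HP (n+2) : Polynomial ℂ)
      = 2 * Polynomial.X * HP (n+1) - (HP (n+1)).derivative := rfl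
  rw [h2, HP_deriv]
  simp

-- f m = m ^ (m/2)
noncomputable def fb (m : ℕ) : ℝ := (m:ℝ) ^ ((m:ℝ)/2)

lemma fb_nonneg (m : ℕ) : 0 ≤ fb m := Real.rpow_nonneg (by positivity) _

lemma fb_mono (m : ℕ) : fb m ≤ fb (m+1) := by
  rcases Nat.eq_zero_or_pos m with h | h
  · subst h; simp [fb]
  · have h1 : (1:ℝ) ≤ (m:ℝ) := by exact_mod_cast h
    calc fb m = (m:ℝ) ^ ((m:ℝ)/2) := rfl
      _ ≤ ((m:ℝ)+1) ^ ((m:ℝ)/2) := by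
          apply Real.rpow_le_rpow (by positivity) (by linarith) (by positivity)
      _ ≤ ((m:ℝ)+1) ^ (((m:ℝ)+1)/2) := by
          apply Real.rpow_le_rpow_of_exponent_le (by linarith) (by linarith)
      _ = fb (m+1) := by simp [fb]

lemma fb_key (m : ℕ) : ((m:ℝ)+1) * fb m ≤ fb (m+2) := by
  have h1 : ((m:ℝ)+1) * fb m ≤ ((m:ℝ)+1) ^ (((m:ℝ)+2)/2) := by
    calc ((m:ℝ)+1) * fb m ≤ ((m:ℝ)+1) * ((m:ℝ)+1) ^ ((m:ℝ)/2) := by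
          apply mul_le_mul_of_nonneg_left _ (by positivity)
          exact Real.rpow_le_rpow (by positivity) (by linarith) (by positivity)
      _ = ((m:ℝ)+1) ^ ((1:ℝ) + (m:ℝ)/2) := by
          rw [Real.rpow_add (by positivity), Real.rpow_one]
      _ = ((m:ℝ)+1) ^ (((m:ℝ)+2)/2) := by ring_nf
  calc ((m:ℝ)+1) * fb m ≤ ((m:ℝ)+1) ^ (((m:ℝ)+2)/2) := h1
    _ ≤ ((m:ℝ)+2) ^ (((m:ℝ)+2)/2) :=
        Real.rpow_le_rpow (by positivity) (by linarith) (by positivity)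
    _ = fb (m+2) := by rw [fb]; norm_num

/-- For any compact `K ⊂ ℂ` there is `C > 0` with
`|H_n(t)| ≤ C exp((3/4) n log n)` for all `n ≥ 1` and `t ∈ K`. -/
theorem stmt19 (K : Set ℂ) (hK : IsCompact K) :
    ∃ C > (0:ℝ), ∀ n : ℕ, 1 ≤ n → ∀ t ∈ K,
      ‖hermiteH n t‖ ≤ C * Real.exp ((3/4) * n * Real.log n) := by
  obtain ⟨r, hr⟩ := hK.isBounded.subset_closedBall 0
  set M : ℝ := max r 0 with hMdef
  have hM0 : 0 ≤ M := le_max_right _ _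
  have htM : ∀ t ∈ K, ‖t‖ ≤ M := by
    intro t ht
    have := hr ht
    simp [Metric.mem_closedBall, Complex.dist_eq] at this
    exact le_trans this (le_max_left _ _)
  set A : ℝ := 4*M + 4 with hAdef
  have hA4 : (4:ℝ) ≤ A := by linarith
  have hA1 : (1:ℝ) ≤ A := by linarith
  have hA0 : (0:ℝ) < A := by linarith
  -- key bound
  have key : ∀ t ∈ K, ∀ n : ℕ, ‖hermiteH n t‖ ≤ A^n * fb n := by
    intro t ht n
    have htM' := htM t ht
    have hb : ∀ m : ℕ, ‖hermiteH m t‖ ≤ A^m * fb m ∧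
        ‖hermiteH (m+1) t‖ ≤ A^(m+1) * fb (m+1) := by
      intro m
      induction m with
      | zero =>
        constructor
        · simp [hermiteH_zero, fb]
        · rw [hermiteH_one]
          have : ‖2 * t‖ = 2 * ‖t‖ := by
            rw [norm_mul]; simp
          rw [this]
          have hfb : fb 1 = 1 := by simp [fb]
          rw [hfb, pow_one, mul_one]
          linarith
      | succ m ih =>
        refine ⟨ih.2, ?_⟩
        rw [hermiteH_rec]
        have tri : ‖2 * t * hermiteH (m+1) t - ((2*(m+1):ℕ):ℂ) * hermiteH m t‖
            ≤ 2 * ‖t‖ * ‖hermiteH (m+1) t‖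
              + (2*((m:ℝ)+1)) * ‖hermiteH m t‖ := by
          calc _ ≤ ‖2 * t * hermiteH (m+1) t‖
                  + ‖((2*(m+1):ℕ):ℂ) * hermiteH m t‖ := by
                exact norm_sub_le (2 * t * hermiteH (m+1) t)
                  (((2*(m+1):ℕ):ℂ) * hermiteH m t)
            _ = 2 * ‖t‖ * ‖hermiteH (m+1) t‖
                  + (2*((m:ℝ)+1)) * ‖hermiteH m t‖ := by
                rw [norm_mul, norm_mul, norm_mul, Complex.norm_natCast]
                push_cast; simp; try ring
        refine tri.trans ?_
        have e1 : 2 * ‖t‖ * ‖hermiteH (m+1) t‖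
            ≤ (A/2) * (A^(m+1) * fb (m+2)) := by
          have h1 : ‖hermiteH (m+1) t‖ ≤ A^(m+1) * fb (m+1) := ih.2
          have h2 : 2 * ‖t‖ ≤ A/2 := by
            have := htM'
            rw [hAdef]; linarith
          calc 2 * ‖t‖ * ‖hermiteH (m+1) t‖
              ≤ (A/2) * (A^(m+1) * fb (m+1)) := by
                apply mul_le_mul h2 h1 (by positivity) (by linarith)
            _ ≤ (A/2) * (A^(m+1) * fb (m+2)) := by
                apply mul_le_mul_of_nonneg_left _ (by linarith)
                exact mul_le_mul_of_nonneg_left (fb_mono (m+1)) (by positivity)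
        have e2 : (2*((m:ℝ)+1)) * ‖hermiteH m t‖
            ≤ (A^2/2) * (A^m * fb (m+2)) := by
          calc (2*((m:ℝ)+1)) * ‖hermiteH m t‖
              ≤ (2*((m:ℝ)+1)) * (A^m * fb m) := by
                apply mul_le_mul_of_nonneg_left ih.1 (by positivity)
            _ = 2 * A^m * (((m:ℝ)+1) * fb m) := by ring
            _ ≤ 2 * A^m * fb (m+2) := by
                apply mul_le_mul_of_nonneg_left (fb_key m) (by positivity)
            _ ≤ (A^2/2) * (A^m * fb (m+2)) := by
                have h16 : (4:ℝ) ≤ A^2/2 := by nlinarith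
                have := mul_le_mul_of_nonneg_right (show (2:ℝ) ≤ A^2/2 by linarith)
                  (mul_nonneg (pow_nonneg hA0.le m) (fb_nonneg (m+2)))
                calc 2 * A^m * fb (m+2) = 2 * (A^m * fb (m+2)) := by ring
                  _ ≤ (A^2/2) * (A^m * fb (m+2)) := this
        calc _ ≤ (A/2) * (A^(m+1) * fb (m+2)) + (A^2/2) * (A^m * fb (m+2)) :=
              add_le_add e1 e2
          _ = A^(m+2) * fb (m+2) := by ring
    exact (hb n).1
  -- final constant
  set N : ℕ := ⌈A^4⌉₊ with hNdef
  refine ⟨A ^ N, pow_pos hA0 N, ?_⟩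
  intro n hn t ht
  have hn1 : (1:ℝ) ≤ (n:ℝ) := by exact_mod_cast hn
  have hnpos : (0:ℝ) < n := by linarith
  -- rewrite target as rpow
  have htarget : Real.exp ((3/4) * n * Real.log n) = (n:ℝ) ^ ((3/4) * (n:ℝ)) := by
    rw [Real.rpow_def_of_pos hnpos]; ring_nf
  rw [htarget]
  have hsplit : (n:ℝ) ^ ((3/4) * (n:ℝ)) = fb n * (n:ℝ) ^ ((n:ℝ)/4) := by
    rw [fb, ← Real.rpow_add hnpos]; ring_nf
  have hAn : A ^ n ≤ A ^ N * (n:ℝ) ^ ((n:ℝ)/4) := by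
    rcases le_or_gt N n with h | h
    · have hx : A ≤ (n:ℝ) ^ ((1:ℝ)/4) := by
        have h1 : A^4 ≤ (n:ℝ) := le_trans (Nat.le_ceil _) (by exact_mod_cast h)
        have h2 : (A^4 : ℝ) ^ ((1:ℝ)/4) ≤ (n:ℝ) ^ ((1:ℝ)/4) :=
          Real.rpow_le_rpow (by positivity) h1 (by norm_num)
        calc A = (A^4 : ℝ) ^ ((1:ℝ)/4) := by
              rw [← Real.rpow_natCast A 4, ← Real.rpow_mul hA0.le]
              norm_num
          _ ≤ (n:ℝ) ^ ((1:ℝ)/4) := h2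
      have hxn : A ^ n ≤ ((n:ℝ) ^ ((1:ℝ)/4)) ^ n := pow_le_pow_left₀ hA0.le hx n
      have heq : ((n:ℝ) ^ ((1:ℝ)/4)) ^ n = (n:ℝ) ^ ((n:ℝ)/4) := by
        rw [← Real.rpow_natCast ((n:ℝ) ^ ((1:ℝ)/4)) n, ← Real.rpow_mul (by positivity)]
        ring_nf
      have hC1 : (1:ℝ) ≤ A ^ N := one_le_pow₀ hA1
      calc A ^ n ≤ (n:ℝ) ^ ((n:ℝ)/4) := heq ▸ hxn
        _ ≤ A ^ N * (n:ℝ) ^ ((n:ℝ)/4) := le_mul_of_one_le_left (Real.rpow_nonneg (by positivity) _) hC1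
    · have h1 : A ^ n ≤ A ^ N := pow_le_pow_right₀ hA1 h.le
      have h2 : (1:ℝ) ≤ (n:ℝ) ^ ((n:ℝ)/4) := Real.one_le_rpow hn1 (by positivity)
      calc A ^ n ≤ A ^ N := h1
        _ ≤ A ^ N * (n:ℝ) ^ ((n:ℝ)/4) := le_mul_of_one_le_right (by positivity) h2
  calc ‖hermiteH n t‖ ≤ A ^ n * fb n := key t ht n
    _ ≤ (A ^ N * (n:ℝ) ^ ((n:ℝ)/4)) * fb n :=
        mul_le_mul_of_nonneg_right hAn (fb_nonneg n)
    _ = A ^ N * (fb n * (n:ℝ) ^ ((n:ℝ)/4)) := by ring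
    _ = A ^ N * (n:ℝ) ^ ((3/4) * (n:ℝ)) := by rw [hsplit]
end
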